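/- arXiv:math/0506517 — 4 statements merged into one kernel-verified Lean document; each statement's English description precedes it below -/
import Mathlib

section
/- Let a ∈ ℂ and r > 0, and let λ, μ ∈ ℂ satisfy |λ − a| < r and |μ − a| > r. Then ∫_0^{2π} 1 / ((a + r·e^{iθ} − λ) · conj(a + r·e^{iθ} − μ)) dθ = 0. -/
/-!
On the circle `|z - a| = r` one has `conj (z - a) = r² / (z - a)`, so `conj (z - μ)` equals
`conj (a - μ) (z - μ*) / (z - a)`, where `μ*` is the inversion of `μ` in the circle; `μ*` lies
inside the circle because `μ` lies outside. Since `dz = i (z - a) dθ`, the integral becomes a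
multiple of `∮ dz / ((z - λ) (z - μ*))`, and this vanishes because both poles are inside the
circle and their residues cancel.
-/

open Real Complex ComplexConjugate Metric Set EuclideanGeometry

theorem circleIntegral.integral_sub_inv_mul_sub_inv_of_mem_ball {c p q : ℂ} {R : ℝ}
    (hp : p ∈ ball c R) (hq : q ∈ ball c R) :
    (∮ z in C(c, R), (z - p)⁻¹ * (z - q)⁻¹) = 0 := by
  rcases eq_or_ne p q with rfl | hpq
  · simpa [← mul_inv, ← sq] using
      circleIntegral.integral_sub_zpow_of_ne (n := -2) (by decide) c p R
  have hR : 0 ≤ R := dist_nonneg.trans hp.le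
  have partial_fractions : EqOn (fun z => (z - p)⁻¹ * (z - q)⁻¹)
      (fun z => (p - q)⁻¹ • ((z - p)⁻¹ - (z - q)⁻¹)) (sphere c R) := by
    intro z hz
    have hzp : z - p ≠ 0 := sub_ne_zero.2 (sphere_disjoint_ball.ne_of_mem hz hp)
    have hzq : z - q ≠ 0 := sub_ne_zero.2 (sphere_disjoint_ball.ne_of_mem hz hq)
    have hpq : p - q ≠ 0 := sub_ne_zero.2 hpq
    simp only [smul_eq_mul]
    field_simp
    ring
  have integrable {w : ℂ} (hw : w ∈ ball c R) : CircleIntegrable (fun z => (z - w)⁻¹) c R :=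
    circleIntegrable_sub_inv_iff.2 <| Or.inr fun h =>
      sphere_disjoint_ball.ne_of_mem (abs_of_nonneg hR ▸ h) hw rfl
  rw [circleIntegral.integral_congr hR partial_fractions, circleIntegral.integral_smul,
    circleIntegral.integral_sub (integrable hp) (integrable hq),
    circleIntegral.integral_sub_inv_of_mem_ball hp, circleIntegral.integral_sub_inv_of_mem_ball hq,
    sub_self, smul_zero]

theorem Complex.inversion_eq (c : ℂ) (R : ℝ) (x : ℂ) :
    inversion c R x = c + R ^ 2 / conj (x - c) := by
  rcases eq_or_ne x c with rfl | hx
  · simp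
  have hx : conj (x - c) ≠ 0 := (map_ne_zero _).2 (sub_ne_zero.2 hx)
  rw [inversion, dist_eq, vsub_eq_sub, vadd_eq_add, real_smul, add_comm, ofReal_pow, ofReal_div,
    div_pow, ← conj_mul']
  field_simp

theorem Complex.conj_sub_mul_sub_center_of_mem_sphere {c z μ : ℂ} {R : ℝ}
    (hz : z ∈ sphere c R) (hμ : μ ≠ c) :
    conj (z - μ) * (z - c) = conj (c - μ) * (z - inversion c R μ) := by
  have hR : conj (z - c) * (z - c) = R ^ 2 := by
    rw [conj_mul', mem_sphere_iff_norm.1 hz]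
  have hμ : conj (μ - c) ≠ 0 := (map_ne_zero _).2 (sub_ne_zero.2 hμ)
  have hzμ : conj (z - μ) = conj (z - c) - conj (μ - c) := by
    rw [← map_sub, sub_sub_sub_cancel_right]
  have hcμ : conj (c - μ) = -conj (μ - c) := by rw [← map_neg, neg_sub]
  rw [Complex.inversion_eq, hzμ, hcμ]
  field_simp
  linear_combination hR

/-- On a circle of center `a` and radius `r` with constant weight, the Cauchy kernel
of an interior point `λ` is orthogonal to the Cauchy kernel of an exterior point `μ`. -/
theorem cauchy_kernels_orthogonal_on_circle
    (a : ℂ) (r : ℝ) (hr : 0 < r) (lam mu : ℂ)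
    (hlam : ‖lam - a‖ < r) (hmu : r < ‖mu - a‖) :
    ∫ θ in (0:ℝ)..(2 * π),
      1 / ((a + r * Complex.exp (θ * Complex.I) - lam) *
            (starRingEnd ℂ) (a + r * Complex.exp (θ * Complex.I) - mu)) = 0 := by
  have hlam : lam ∈ ball a r := mem_ball_iff_norm.2 hlam
  have hmu_ne : mu ≠ a := sub_ne_zero.1 (norm_pos_iff.1 (hr.trans hmu))
  have hinv : inversion a r mu ∈ ball a r := by
    rw [mem_ball, dist_inversion_center, dist_eq_norm, div_lt_iff₀ (hr.trans hmu)]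
    nlinarith
  have integrand_eq (θ : ℝ) :
      1 / ((circleMap a r θ - lam) * conj (circleMap a r θ - mu)) =
        deriv (circleMap a r) θ • ((I * conj (a - mu))⁻¹ *
          ((circleMap a r θ - lam)⁻¹ * (circleMap a r θ - inversion a r mu)⁻¹)) := by
    have hz := circleMap_mem_sphere a hr.le θ
    have hza : circleMap a r θ - a ≠ 0 := sub_ne_zero.2 (circleMap_ne_center hr.ne')
    rw [eq_div_of_mul_eq hza (conj_sub_mul_sub_center_of_mem_sphere hz hmu_ne), deriv_circleMap,
      ← circleMap_sub_center, smul_eq_mul]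
    simp only [mul_inv, div_eq_mul_inv, inv_inv]
    field_simp
  change ∫ θ in (0:ℝ)..2 * π, 1 / ((circleMap a r θ - lam) * conj (circleMap a r θ - mu)) = 0
  rw [intervalIntegral.integral_congr fun θ _ => integrand_eq θ]
  change (∮ z in C(a, r), _ * ((z - lam)⁻¹ * (z - inversion a r mu)⁻¹)) = 0
  rw [circleIntegral.integral_const_mul,
    circleIntegral.integral_sub_inv_mul_sub_inv_of_mem_ball hlam hinv, mul_zero]
end

section
/- Let w : ℝ → ℂ be integrable on [0, 2π] and let λ ∈ ℂ with |λ| < 1. Suppose that for every μ ∈ ℂ with |μ| > 1 one has ∫_0^{2π} w(θ) / ((e^{iθ} − λ) · (e^{−iθ} − conj(μ))) dθ = 0. Then ∫_0^{2π} w(θ) / (e^{iθ} − λ) dθ = 0. -/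
open MeasureTheory Real
open Filter Topology

/-! Put `g θ = w θ / (e^{iθ} - λ)` and `e θ = e^{-iθ}`, and use the orthogonality relation only at
real `μ = t > 1`. Since `1 + t / (e - t) = e / (e - t)`, adding `t` times that relation to the
Cauchy transform `∫ g` gives `∫ g e / (e - t)`, whose modulus is at most `‖g‖₁ / (t - 1)` because
`|e| = 1`. Letting `t → ∞` forces `∫ g = 0`. -/

section CauchyTransformAtInfinity

variable {α : Type*} [MeasurableSpace α] {ν : Measure α} {g e : α → ℂ}

lemma norm_integral_add_mul_integral_div_sub_le (hg : Integrable g ν)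
    (he : AEStronglyMeasurable e ν) (he_le : ∀ x, ‖e x‖ ≤ 1) {t : ℝ} (ht : 1 < t) :
    ‖(∫ x, g x ∂ν) + t * ∫ x, g x / (e x - t) ∂ν‖ ≤ (∫ x, ‖g x‖ ∂ν) / (t - 1) := by
  have hdist : ∀ x, t - 1 ≤ ‖e x - t‖ := fun x => by
    have := norm_sub_norm_le (t : ℂ) (e x)
    rw [Complex.norm_real, norm_of_nonneg (by linarith), norm_sub_rev] at this
    linarith [he_le x]
  have hne : ∀ x, e x - t ≠ 0 := fun x h => by
    have := hdist x
    rw [h, norm_zero] at this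
    linarith
  have hdiv : Integrable (fun x => g x / (e x - t)) ν := by
    simp only [div_eq_mul_inv]
    refine hg.mul_bdd (c := 1 / (t - 1))
      (he.aemeasurable.sub_const _).inv.aestronglyMeasurable (.of_forall fun x => ?_)
    rw [norm_inv, ← one_div]
    gcongr
    exact hdist x
  have hsum : (∫ x, g x ∂ν) + t * ∫ x, g x / (e x - t) ∂ν
      = ∫ x, g x * (e x / (e x - t)) ∂ν := by
    rw [← integral_const_mul, ← integral_add hg (hdiv.const_mul _)]
    refine integral_congr_ae (.of_forall fun x => ?_)
    field_simp [hne x]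
    ring
  rw [hsum, ← integral_div]
  refine norm_integral_le_of_norm_le (hg.norm.div_const _) (.of_forall fun x => ?_)
  rw [norm_mul, norm_div, div_eq_mul_one_div ‖g x‖]
  gcongr
  exacts [he_le x, hdist x]

lemma integral_eq_zero_of_forall_integral_div_sub_eq_zero (hg : Integrable g ν)
    (he : AEStronglyMeasurable e ν) (he_le : ∀ x, ‖e x‖ ≤ 1)
    (h : ∀ t : ℝ, 1 < t → ∫ x, g x / (e x - t) ∂ν = 0) :
    ∫ x, g x ∂ν = 0 := by
  have hbound : ∀ᶠ t : ℝ in atTop, ‖∫ x, g x ∂ν‖ ≤ (∫ x, ‖g x‖ ∂ν) / (t - 1) := by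
    filter_upwards [eventually_gt_atTop 1] with t ht
    simpa [h t ht] using norm_integral_add_mul_integral_div_sub_le hg he he_le ht
  have hlim : Tendsto (fun t : ℝ => (∫ x, ‖g x‖ ∂ν) / (t - 1)) atTop (𝓝 0) :=
    tendsto_const_nhds.div_atTop (tendsto_atTop_add_const_right _ _ tendsto_id)
  exact norm_le_zero_iff.mp (ge_of_tendsto hlim hbound)

end CauchyTransformAtInfinity

/-- First step of the proof of the Theorem: from the orthogonality relations with all
exterior points `μ`, letting `μ → ∞` yields the vanishing of the Cauchy transform of
the weight at the interior point `λ`. -/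
theorem cauchy_transform_vanishes_of_orthogonality
    (w : ℝ → ℂ)
    (hw : IntegrableOn w (Set.Icc 0 (2 * π)))
    (lam : ℂ) (hlam : ‖lam‖ < 1)
    (horth : ∀ mu : ℂ, 1 < ‖mu‖ →
      ∫ θ in (0:ℝ)..(2 * π),
        w θ /
          ((Complex.exp (θ * Complex.I) - lam) *
            (Complex.exp (-θ * Complex.I) - (starRingEnd ℂ) mu)) = 0) :
    ∫ θ in (0:ℝ)..(2 * π), w θ / (Complex.exp (θ * Complex.I) - lam) = 0 := by
  have hne : ∀ θ : ℝ, Complex.exp (θ * Complex.I) - lam ≠ 0 := fun θ h => by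
    rw [sub_eq_zero] at h
    rw [← h, Complex.norm_exp_ofReal_mul_I] at hlam
    exact hlam.false
  have hcauchy : IntegrableOn (fun θ : ℝ => w θ / (Complex.exp (θ * Complex.I) - lam))
      (Set.Ioc 0 (2 * π)) := by
    simp only [div_eq_mul_inv]
    refine (hw.mul_continuousOn ?_ isCompact_Icc).mono_set Set.Ioc_subset_Icc_self
    exact (Continuous.inv₀ (by fun_prop) hne).continuousOn
  rw [intervalIntegral.integral_of_le (by positivity)]
  refine integral_eq_zero_of_forall_integral_div_sub_eq_zero hcauchy
    (e := fun θ : ℝ => Complex.exp (-θ * Complex.I)) (by fun_prop)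
    (fun θ => by rw [← Complex.ofReal_neg, Complex.norm_exp_ofReal_mul_I]) fun t ht => ?_
  have h := horth t (by rwa [Complex.norm_real, norm_of_nonneg (by linarith)])
  rw [Complex.conj_ofReal, intervalIntegral.integral_of_le (by positivity)] at h
  simpa only [div_div] using h
end

section
/- Let w : ℝ → ℂ be integrable on [0, 2π]. Suppose that ∫_0^{2π} w(θ) / (e^{iθ} − λ) dθ = 0 for every λ ∈ ℂ with |λ| < 1. Then ∫_0^{2π} w(θ) · e^{−inθ} dθ = 0 for every integer n ≥ 1. -/
/-!
For `‖λ‖ < 1` the kernel expands geometrically as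
`1 / (e^{iθ} - λ) = ∑ₘ λ^m e^{-i(m+1)θ}`, and the expansion may be integrated term by term
against `w`, the terms being dominated by `‖w θ‖ ‖λ‖^m`. So on the unit disc the Cauchy transform
of `w` is the power series `∑ₘ c_{m+1} λ^m`, where `c_k` is the `k`-th Fourier coefficient of `w`.
It vanishes identically there, hence so do its coefficients.
-/

open MeasureTheory Real Complex

theorem hasSum_pow_div_pow_succ {𝕜 : Type*} [NormedField 𝕜] [CompleteSpace 𝕜]
    {u z : 𝕜} (hzu : ‖z‖ < ‖u‖) :
    HasSum (fun n : ℕ => z ^ n / u ^ (n + 1)) (u - z)⁻¹ := by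
  have hu : u ≠ 0 := norm_pos_iff.mp ((norm_nonneg z).trans_lt hzu)
  have hratio : ‖z / u‖ < 1 := by
    rwa [norm_div, div_lt_one ((norm_nonneg z).trans_lt hzu)]
  convert (hasSum_geometric_of_norm_lt_one hratio).div_const u using 1
  · funext n; rw [div_pow, pow_succ, div_div]
  · field_simp

theorem hasSum_pow_mul_exp_neg_succ_mul_I {lam : ℂ} (hlam : ‖lam‖ < 1) (θ : ℝ) :
    HasSum (fun n : ℕ => lam ^ n * exp (-((n : ℂ) + 1) * θ * I)) (exp (θ * I) - lam)⁻¹ := by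
  have hterm : ∀ n : ℕ,
      lam ^ n / exp (θ * I) ^ (n + 1) = lam ^ n * exp (-((n : ℂ) + 1) * θ * I) := by
    intro n
    rw [div_eq_mul_inv, ← Complex.exp_nat_mul, ← Complex.exp_neg]
    push_cast
    ring_nf
  simpa only [hterm] using
    hasSum_pow_div_pow_succ (z := lam) (u := exp (θ * I)) (by rwa [norm_exp_ofReal_mul_I])

theorem hasSum_integral_div_exp_mul_I_sub {w : ℝ → ℂ} {a b : ℝ}
    (hw : IntervalIntegrable w volume a b) {lam : ℂ} (hlam : ‖lam‖ < 1) :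
    HasSum (fun n : ℕ => (∫ θ in a..b, w θ * exp (-((n : ℂ) + 1) * θ * I)) * lam ^ n)
      (∫ θ in a..b, w θ / (exp (θ * I) - lam)) := by
  have hexp_continuous : ∀ n : ℕ, Continuous fun θ : ℝ => exp (-((n : ℂ) + 1) * θ * I) := by
    intro n; fun_prop
  have hexp_norm : ∀ (n : ℕ) (θ : ℝ), ‖exp (-((n : ℂ) + 1) * θ * I)‖ = 1 := by
    intro n θ
    rw [norm_exp]; simp
  have hsum := intervalIntegral.hasSum_integral_of_dominated_convergence
    (F := fun (n : ℕ) θ => w θ * (lam ^ n * exp (-((n : ℂ) + 1) * θ * I)))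
    (fun n θ => ‖w θ‖ * ‖lam‖ ^ n)
    (fun n => (hw.mul_continuousOn
      ((hexp_continuous n).const_mul _).continuousOn).def'.aestronglyMeasurable)
    (fun n => .of_forall fun θ _ => by rw [norm_mul, norm_mul, norm_pow, hexp_norm, mul_one])
    (.of_forall fun θ _ => (summable_geometric_of_lt_one (norm_nonneg _) hlam).mul_left _)
    (by
      simp_rw [tsum_mul_left, tsum_geometric_of_lt_one (norm_nonneg _) hlam]
      exact hw.norm.mul_const _)
    (.of_forall fun θ _ => (hasSum_pow_mul_exp_neg_succ_mul_I hlam θ).mul_left (w θ))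
  have hcoeff : ∀ n : ℕ, ∫ θ in a..b, w θ * (lam ^ n * exp (-((n : ℂ) + 1) * θ * I)) =
      (∫ θ in a..b, w θ * exp (-((n : ℂ) + 1) * θ * I)) * lam ^ n := by
    intro n
    rw [← intervalIntegral.integral_mul_const]
    exact intervalIntegral.integral_congr fun θ _ => by ring
  simpa only [hcoeff, div_eq_mul_inv] using hsum

open FormalMultilinearSeries in
theorem eq_zero_of_hasSum_mul_pow_eq_zero {𝕜 : Type*} [NontriviallyNormedField 𝕜]
    {a : ℕ → 𝕜} {r : ℝ} (hr : 0 < r)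
    (h : ∀ z : 𝕜, ‖z‖ < r → HasSum (fun n => a n * z ^ n) 0) : a = 0 := by
  obtain ⟨z₀, hz₀, hz₀r⟩ := NormedField.exists_norm_lt 𝕜 hr
  have hradius : (‖z₀‖₊ : ENNReal) ≤ (ofScalars 𝕜 a).radius := by
    refine (ofScalars 𝕜 a).le_radius_of_tendsto (l := 0) ?_
    simpa [ofScalars_norm, norm_mul, norm_pow] using
      ((h z₀ hz₀r).summable.tendsto_atTop_zero).norm
  have hseries : HasFPowerSeriesOnBall 0 (ofScalars 𝕜 a) 0 ‖z₀‖ₑ :=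
    { r_le := hradius
      r_pos := by simpa using hz₀
      hasSum := fun {y} hy => by
        have hy' : ‖y‖ < ‖z₀‖ := by simpa [enorm, ← NNReal.coe_lt_coe] using hy
        simpa [ofScalars_apply_eq, smul_eq_mul, mul_comm] using h y (hy'.trans hz₀r) }
  exact (ofScalars_series_eq_zero 𝕜).mp hseries.hasFPowerSeriesAt.eq_zero

/-- Smirnov-theorem step on the unit circle: if the Cauchy transform of `w` vanishes at
every interior point, then all Fourier coefficients of `w` of positive index vanish. -/
theorem fourier_coeffs_vanish_of_cauchy_transform_vanishes_inside
    (w : ℝ → ℂ)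
    (hw : IntegrableOn w (Set.Icc 0 (2 * π)))
    (hC : ∀ lam : ℂ, ‖lam‖ < 1 →
      ∫ θ in (0:ℝ)..(2 * π), w θ / (Complex.exp (θ * Complex.I) - lam) = 0) :
    ∀ n : ℤ, 1 ≤ n →
      ∫ θ in (0:ℝ)..(2 * π), w θ * Complex.exp (-(n : ℂ) * θ * Complex.I) = 0 := by
  have hw_interval : IntervalIntegrable w volume 0 (2 * π) :=
    (intervalIntegrable_iff_integrableOn_Icc_of_le (by positivity)).mpr hw
  have hcoeff_zero := eq_zero_of_hasSum_mul_pow_eq_zero one_pos fun lam hlam =>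
    hC lam hlam ▸ hasSum_integral_div_exp_mul_I_sub hw_interval hlam
  intro n hn
  obtain ⟨m, rfl⟩ : ∃ m : ℕ, n = m + 1 := ⟨(n - 1).toNat, by omega⟩
  simpa using congrFun hcoeff_zero m
end

section
/- Let g : ℝ → ℂ be integrable on [0, 2π]. Suppose that ∫_0^{2π} g(θ) / (e^{iθ} − μ) dθ = 0 for every μ ∈ ℂ with |μ| > 1. Then ∫_0^{2π} g(θ) · e^{inθ} dθ = 0 for every integer n ≥ 0. -/
/-!
Write `F n μ = ∫ g z ^ n / (z - μ)` for `z = e^{iθ}`. Since `z / (z - μ) = 1 + μ / (z - μ)`,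
`F (n + 1) μ = ∫ g z ^ n + μ F n μ`. If `F n` vanishes on `‖μ‖ > 1`, then `F (n + 1)` is the
constant `∫ g z ^ n` there; but `‖F (n + 1) μ‖ ≤ ‖g‖₁ / (‖μ‖ - 1) → 0`, so this moment is zero
and `F (n + 1)` vanishes as well. Induction starts from `F 0`, the Cauchy transform.
-/

open MeasureTheory Real Filter Topology

section

variable {α : Type*} [MeasurableSpace α] {ν : Measure α} {g z : α → ℂ}

lemma norm_pow_div_sub_le_inv {x μ : ℂ} (hx : ‖x‖ ≤ 1) (hμ : 1 < ‖μ‖) (n : ℕ) :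
    ‖x ^ n / (x - μ)‖ ≤ (‖μ‖ - 1)⁻¹ := by
  have hdist : ‖μ‖ - 1 ≤ ‖x - μ‖ := by
    linarith [norm_sub_norm_le μ x, norm_sub_rev μ x]
  rw [norm_div, norm_pow, div_eq_mul_inv]
  calc ‖x‖ ^ n * ‖x - μ‖⁻¹ ≤ 1 * (‖μ‖ - 1)⁻¹ := by
        gcongr
        exact pow_le_one₀ (norm_nonneg x) hx
    _ = (‖μ‖ - 1)⁻¹ := one_mul _

lemma integrable_mul_pow_div_sub (hg : Integrable g ν) (hz : Measurable z)
    (hz1 : ∀ a, ‖z a‖ ≤ 1) {μ : ℂ} (hμ : 1 < ‖μ‖) (n : ℕ) :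
    Integrable (fun a ↦ g a * (z a ^ n / (z a - μ))) ν :=
  hg.mul_bdd (by fun_prop : Measurable _).aestronglyMeasurable
    (.of_forall fun a ↦ norm_pow_div_sub_le_inv (hz1 a) hμ n)

lemma integrable_mul_pow (hg : Integrable g ν) (hz : Measurable z)
    (hz1 : ∀ a, ‖z a‖ ≤ 1) (n : ℕ) :
    Integrable (fun a ↦ g a * z a ^ n) ν :=
  hg.mul_bdd (by fun_prop : Measurable _).aestronglyMeasurable (.of_forall fun a ↦ by
    simpa only [norm_pow] using pow_le_one₀ (norm_nonneg _) (hz1 a))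

lemma norm_integral_mul_pow_div_sub_le (hg : Integrable g ν) (hz1 : ∀ a, ‖z a‖ ≤ 1)
    {μ : ℂ} (hμ : 1 < ‖μ‖) (n : ℕ) :
    ‖∫ a, g a * (z a ^ n / (z a - μ)) ∂ν‖ ≤ (∫ a, ‖g a‖ ∂ν) / (‖μ‖ - 1) := by
  rw [div_eq_mul_inv, ← integral_mul_const]
  refine norm_integral_le_of_norm_le (hg.norm.mul_const _) (.of_forall fun a ↦ ?_)
  rw [norm_mul]
  exact mul_le_mul_of_nonneg_left (norm_pow_div_sub_le_inv (hz1 a) hμ n) (norm_nonneg _)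

lemma tendsto_integral_mul_pow_div_sub_atTop (hg : Integrable g ν) (hz1 : ∀ a, ‖z a‖ ≤ 1)
    (n : ℕ) :
    Tendsto (fun M : ℝ ↦ ∫ a, g a * (z a ^ n / (z a - M)) ∂ν) atTop (𝓝 0) := by
  have hK : Tendsto (fun M : ℝ ↦ (∫ a, ‖g a‖ ∂ν) / (M - 1)) atTop (𝓝 0) :=
    tendsto_const_nhds.div_atTop (tendsto_atTop_add_const_right _ _ tendsto_id)
  refine squeeze_zero_norm' ?_ hK
  filter_upwards [eventually_gt_atTop 1] with M hM
  have hM' : ‖(M : ℂ)‖ = M := Complex.norm_of_nonneg (by linarith)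
  have hbound := norm_integral_mul_pow_div_sub_le hg hz1 (hM'.symm ▸ hM : 1 < ‖(M : ℂ)‖) n
  rwa [hM'] at hbound

lemma integral_mul_pow_succ_div_sub (hg : Integrable g ν) (hz : Measurable z)
    (hz1 : ∀ a, ‖z a‖ ≤ 1) {μ : ℂ} (hμ : 1 < ‖μ‖) (n : ℕ) :
    ∫ a, g a * (z a ^ (n + 1) / (z a - μ)) ∂ν =
      ∫ a, g a * z a ^ n ∂ν + μ * ∫ a, g a * (z a ^ n / (z a - μ)) ∂ν := by
  have hpt (a : α) : g a * (z a ^ (n + 1) / (z a - μ)) =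
      g a * z a ^ n + μ * (g a * (z a ^ n / (z a - μ))) := by
    have hne : z a - μ ≠ 0 := by
      refine sub_ne_zero.mpr fun h ↦ ?_
      linarith [hz1 a, h ▸ hμ]
    field_simp
    ring
  simp_rw [hpt]
  rw [integral_add (integrable_mul_pow hg hz hz1 n)
    ((integrable_mul_pow_div_sub hg hz hz1 hμ n).const_mul μ), integral_const_mul]

lemma integral_mul_pow_eq_zero_of_integral_mul_pow_div_sub_eq_zero (hg : Integrable g ν)
    (hz : Measurable z) (hz1 : ∀ a, ‖z a‖ ≤ 1) {n : ℕ}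
    (hF : ∀ μ : ℂ, 1 < ‖μ‖ → ∫ a, g a * (z a ^ n / (z a - μ)) ∂ν = 0) :
    ∫ a, g a * z a ^ n ∂ν = 0 := by
  refine tendsto_nhds_unique ?_ (tendsto_integral_mul_pow_div_sub_atTop hg hz1 (n + 1))
  refine tendsto_const_nhds.congr' ?_
  filter_upwards [eventually_gt_atTop 1] with M hM
  have hμ : 1 < ‖(M : ℂ)‖ := by rwa [Complex.norm_of_nonneg (by linarith)]
  rw [integral_mul_pow_succ_div_sub hg hz hz1 hμ, hF _ hμ, mul_zero, add_zero]

theorem integral_mul_pow_div_sub_eq_zero (hg : Integrable g ν) (hz : Measurable z)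
    (hz1 : ∀ a, ‖z a‖ ≤ 1) (hC : ∀ μ : ℂ, 1 < ‖μ‖ → ∫ a, g a / (z a - μ) ∂ν = 0) (n : ℕ) :
    ∀ μ : ℂ, 1 < ‖μ‖ → ∫ a, g a * (z a ^ n / (z a - μ)) ∂ν = 0 := by
  induction n with
  | zero => simpa only [pow_zero, mul_one_div] using hC
  | succ n ih =>
    intro μ hμ
    rw [integral_mul_pow_succ_div_sub hg hz hz1 hμ,
      integral_mul_pow_eq_zero_of_integral_mul_pow_div_sub_eq_zero hg hz hz1 ih, ih μ hμ,
      mul_zero, add_zero]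

theorem integral_mul_pow_eq_zero_of_cauchy_transform_eq_zero (hg : Integrable g ν)
    (hz : Measurable z) (hz1 : ∀ a, ‖z a‖ ≤ 1)
    (hC : ∀ μ : ℂ, 1 < ‖μ‖ → ∫ a, g a / (z a - μ) ∂ν = 0) (n : ℕ) :
    ∫ a, g a * z a ^ n ∂ν = 0 :=
  integral_mul_pow_eq_zero_of_integral_mul_pow_div_sub_eq_zero hg hz hz1
    (integral_mul_pow_div_sub_eq_zero hg hz hz1 hC n)

end

/-- Dual Smirnov-theorem step on the unit circle: if the Cauchy transform of `g`
vanishes at every exterior point, then all Fourier coefficients of `g` of nonpositive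
index vanish. -/
theorem fourier_coeffs_vanish_of_cauchy_transform_vanishes_outside
    (g : ℝ → ℂ)
    (hg : IntegrableOn g (Set.Icc 0 (2 * π)))
    (hC : ∀ mu : ℂ, 1 < ‖mu‖ →
      ∫ θ in (0:ℝ)..(2 * π), g θ / (Complex.exp (θ * Complex.I) - mu) = 0) :
    ∀ n : ℤ, 0 ≤ n →
      ∫ θ in (0:ℝ)..(2 * π), g θ * Complex.exp ((n : ℂ) * θ * Complex.I) = 0 := by
  intro n hn
  lift n to ℕ using hn
  have h2π : (0 : ℝ) ≤ 2 * π := by positivity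
  simp only [intervalIntegral.integral_of_le h2π] at hC ⊢
  simp only [Int.cast_natCast, mul_assoc, Complex.exp_nat_mul]
  exact integral_mul_pow_eq_zero_of_cauchy_transform_eq_zero (hg.mono_set Set.Ioc_subset_Icc_self)
    (by fun_prop) (fun θ ↦ (Complex.norm_exp_ofReal_mul_I θ).le) hC n
end
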